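/- Let m, N, T ≥ 1 be integers and α > 0. Let Φ : {1,…,T} → {0,…,N}, and let y_{t,k} ∈ ℝ^m with ‖y_{t,k}‖ ≤ 1 for each t ∈ {1,…,T} and k ∈ {1,…,Φ_t}. Define Σ_0 := α I_m and Σ_t := Σ_{t−1} + Σ_{k=1}^{Φ_t} y_{t,k} y_{t,k}ᵀ, and g_{t,k} := (y_{t,k}ᵀ (Σ_{t−1})^{−1} y_{t,k})^{1/2}. Then Σ_{t=1}^{T} Σ_{k=1}^{Φ_t} g_{t,k} ≤ √( T N² m log(1 + TN/(m α)) / (α log(1 + α^{−1})) ). -/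

import Mathlib

open Finset Matrix

/-- `Sig m α Φ y t = Σ_t`: the regularized Gram matrix after `t` rounds, defined by
`Σ_0 = α I_m` and `Σ_t = Σ_{t-1} + Σ_{k=1}^{Φ_t} y_{t,k} y_{t,k}ᵀ`. -/
noncomputable def Sig (m : ℕ) (α : ℝ) (Φ : ℕ → ℕ) (y : ℕ → ℕ → Fin m → ℝ) :
    ℕ → Matrix (Fin m) (Fin m) ℝ
  | 0 => α • (1 : Matrix (Fin m) (Fin m) ℝ)
  | t + 1 => Sig m α Φ y t +
      ∑ k ∈ Finset.Icc 1 (Φ (t + 1)), Matrix.vecMulVec (y (t + 1) k) (y (t + 1) k)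

/-!
Put `q_{t,k} = y_{t,k}ᵀ Σ_{t-1}⁻¹ y_{t,k}`, which lies in `[0, α⁻¹]` because `Σ_{t-1} ≥ α I`.
By concavity of `log (1 + ·)`, `q ≤ C log (1 + q)` with `C = α⁻¹ / log (1 + α⁻¹)`, so the round
sum `S_t = Σ_k q_{t,k}` satisfies `S_t ≤ N C log (1 + S_t)`. Writing the round update as `BᵀB`,
the matrix determinant lemma gives `det Σ_t = det Σ_{t-1} · det (1 + B Σ_{t-1}⁻¹ Bᵀ)`, which is at
least `det Σ_{t-1} (1 + S_t)`; so `Σ_t log (1 + S_t)` telescopes to at most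
`log det Σ_T - m log α`, and AM-GM on the eigenvalues of `Σ_T`, whose trace is at most
`m α + T N`, bounds this by `m log (1 + T N / (m α))`. Cauchy–Schwarz over the at most `T N`
pairs `(t, k)` turns this bound on `Σ q` into one on `Σ √q`.
-/

lemma one_add_sum_le_prod_one_add {ι : Type*} (s : Finset ι) {f : ι → ℝ}
    (hf : ∀ i ∈ s, 0 ≤ f i) : 1 + ∑ i ∈ s, f i ≤ ∏ i ∈ s, (1 + f i) := by
  induction s using Finset.cons_induction with
  | empty => simp
  | cons a s ha ih =>
    rw [sum_cons, prod_cons]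
    have hfa := hf a (mem_cons_self a s)
    have hs := ih fun i hi => hf i (mem_cons_of_mem hi)
    have hs0 : 0 ≤ ∑ i ∈ s, f i := sum_nonneg fun i hi => hf i (mem_cons_of_mem hi)
    nlinarith

lemma mul_log_one_add_le_mul_log_one_add {c u : ℝ} (hc : 0 < c) (hu : 0 ≤ u) (huc : u ≤ c) :
    u * Real.log (1 + c) ≤ c * Real.log (1 + u) := by
  have hbern := rpow_one_add_le_one_add_mul_self (s := c) (by linarith)
    (div_nonneg hu hc.le) ((div_le_one hc).mpr huc)
  rw [div_mul_cancel₀ u hc.ne'] at hbern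
  have hlog := Real.log_le_log (by positivity) hbern
  rw [Real.log_rpow (by linarith)] at hlog
  calc u * Real.log (1 + c) = c * (u / c * Real.log (1 + c)) := by field_simp
    _ ≤ c * Real.log (1 + u) := mul_le_mul_of_nonneg_left hlog hc.le

lemma sum_le_card_mul_div_log_mul_log_one_add_sum {ι : Type*} (s : Finset ι) {q : ι → ℝ} {c : ℝ}
    (hc : 0 < c) (hq : ∀ i ∈ s, 0 ≤ q i ∧ q i ≤ c) :
    ∑ i ∈ s, q i ≤ #s * (c / Real.log (1 + c)) * Real.log (1 + ∑ i ∈ s, q i) := by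
  have hlog : 0 < Real.log (1 + c) := Real.log_pos (by linarith)
  have hterm : ∀ i ∈ s, q i ≤ c / Real.log (1 + c) * Real.log (1 + ∑ i ∈ s, q i) := by
    intro i hi
    obtain ⟨hqi, hqic⟩ := hq i hi
    calc q i ≤ c / Real.log (1 + c) * Real.log (1 + q i) := by
          rw [div_mul_eq_mul_div, le_div_iff₀ hlog]
          linarith [mul_log_one_add_le_mul_log_one_add hc hqi hqic]
      _ ≤ c / Real.log (1 + c) * Real.log (1 + ∑ i ∈ s, q i) := by
          gcongr
          exact single_le_sum (fun j hj => (hq j hj).1) hi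
  simpa [mul_assoc] using sum_le_card_nsmul s q _ hterm

lemma sum_sum_sqrt_le_sqrt_card_mul {ι κ : Type*} (s : Finset ι) (t : ι → Finset κ)
    {f : ι → κ → ℝ} (hf : ∀ i ∈ s, ∀ j ∈ t i, 0 ≤ f i j) :
    ∑ i ∈ s, ∑ j ∈ t i, √(f i j) ≤
      √((∑ i ∈ s, #(t i)) * ∑ i ∈ s, ∑ j ∈ t i, f i j) := by
  rw [sum_sigma', sum_sigma', ← card_sigma]
  refine Real.le_sqrt_of_sq_le ((sq_sum_le_card_mul_sum_sq).trans_eq ?_)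
  congr 1
  refine sum_congr rfl fun x hx => Real.sq_sqrt ?_
  rw [mem_sigma] at hx
  exact hf _ hx.1 _ hx.2

namespace Matrix

variable {n : Type*} [Fintype n]

lemma posSemidef_sum_vecMulVec_self {ι : Type*} (s : Finset ι) (w : ι → n → ℝ) :
    (∑ k ∈ s, vecMulVec (w k) (w k)).PosSemidef :=
  posSemidef_sum s fun k _ => by simpa using posSemidef_vecMulVec_self_star (w k)

lemma trace_mul_vecMulVec_self (C : Matrix n n ℝ) (v : n → ℝ) :
    (C * vecMulVec v v).trace = v ⬝ᵥ C *ᵥ v := by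
  simp only [trace, diag, mul_apply, vecMulVec_apply, dotProduct, mulVec, mul_sum]
  exact sum_congr rfl fun i _ => sum_congr rfl fun j _ => by ring

variable [DecidableEq n]

lemma IsHermitian.det_one_add_eq_prod {B : Matrix n n ℝ} (hB : B.IsHermitian) :
    (1 + B).det = ∏ i, (1 + hB.eigenvalues i) := by
  conv_lhs => rw [hB.spectral_theorem]
  rw [← map_one (Unitary.conjStarAlgAut ℝ _ hB.eigenvectorUnitary), ← map_add,
    Unitary.conjStarAlgAut_apply, det_mul, det_mul, mul_comm, ← mul_assoc, ← det_mul,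
    Unitary.coe_star_mul_self, det_one, one_mul, ← diagonal_one, diagonal_add, det_diagonal]
  simp

lemma PosSemidef.one_add_trace_le_det_one_add {B : Matrix n n ℝ} (hB : B.PosSemidef) :
    1 + B.trace ≤ (1 + B).det := by
  rw [hB.isHermitian.det_one_add_eq_prod, hB.isHermitian.trace_eq_sum_eigenvalues]
  simpa using one_add_sum_le_prod_one_add univ fun i _ => hB.eigenvalues_nonneg i

open scoped MatrixOrder in
lemma PosDef.det_mul_one_add_trace_inv_mul_le_det_add {A M : Matrix n n ℝ} (hA : A.PosDef)
    (hM : M.PosSemidef) : A.det * (1 + (A⁻¹ * M).trace) ≤ (A + M).det := by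
  obtain ⟨B, rfl⟩ := CStarAlgebra.nonneg_iff_eq_star_mul_self.mp hM.nonneg
  have hC : (B * A⁻¹ * star B).PosSemidef := hA.inv.posSemidef.mul_mul_conjTranspose_same B
  rw [det_add_mul _ _ ((isUnit_iff_isUnit_det A).mp hA.isUnit), ← Matrix.mul_assoc,
    trace_mul_cycle]
  exact mul_le_mul_of_nonneg_left hC.one_add_trace_le_det_one_add hA.det_pos.le

lemma PosDef.log_det_le_card_mul_log {A : Matrix n n ℝ} (hA : A.PosDef) {c : ℝ} (hc : 0 < c)
    (htr : A.trace ≤ Fintype.card n * c) : Real.log A.det ≤ Fintype.card n * Real.log c := by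
  set d := hA.isHermitian.eigenvalues
  have hd : ∀ i, 0 < d i := hA.eigenvalues_pos
  have htr' : (∑ i, d i) / c ≤ Fintype.card n := by
    rw [div_le_iff₀ hc]
    simpa [hA.isHermitian.trace_eq_sum_eigenvalues] using htr
  simp only [hA.isHermitian.det_eq_prod_eigenvalues, RCLike.ofReal_real_eq_id, id]
  rw [Real.log_prod fun i _ => (hd i).ne']
  -- `log x ≤ x - 1` at `x = d i / c`
  calc ∑ i, Real.log (d i) ≤ ∑ i, (Real.log c + (d i / c - 1)) := by
        refine sum_le_sum fun i _ => ?_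
        have := Real.log_le_sub_one_of_pos (div_pos (hd i) hc)
        rw [Real.log_div (hd i).ne' hc.ne'] at this
        linarith
    _ = Fintype.card n * Real.log c + ((∑ i, d i) / c - Fintype.card n) := by
        rw [sum_add_distrib, sum_sub_distrib, ← sum_div]
        simp
    _ ≤ Fintype.card n * Real.log c := by linarith

lemma dotProduct_inv_mulVec_le {A : Matrix n n ℝ} (hA : IsUnit A) {α : ℝ} (hα : 0 < α)
    (hlow : ∀ x, α * (x ⬝ᵥ x) ≤ x ⬝ᵥ A *ᵥ x) (v : n → ℝ) :
    v ⬝ᵥ A⁻¹ *ᵥ v ≤ α⁻¹ * (v ⬝ᵥ v) := by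
  set z := A⁻¹ *ᵥ v
  have hAz : A *ᵥ z = v := by
    rw [mulVec_mulVec, mul_nonsing_inv A ((isUnit_iff_isUnit_det A).mp hA), one_mulVec]
  have hz : α * (z ⬝ᵥ z) ≤ v ⬝ᵥ z := by
    simpa [hAz, dotProduct_comm z v] using hlow z
  have hcs : (v ⬝ᵥ z) ^ 2 ≤ (v ⬝ᵥ v) * (z ⬝ᵥ z) := by
    simpa [dotProduct, sq] using sum_mul_sq_le_sq_mul_sq univ v z
  have hzz : 0 ≤ z ⬝ᵥ z := dotProduct_self_star_nonneg z
  have hvv : 0 ≤ v ⬝ᵥ v := dotProduct_self_star_nonneg v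
  rw [le_inv_mul_iff₀ hα]
  by_contra! h
  have ha : 0 < v ⬝ᵥ z := by nlinarith
  nlinarith [mul_le_mul_of_nonneg_left hz hvv, mul_lt_mul_of_pos_right h ha]

end Matrix

section Sig

variable {m : ℕ} {α : ℝ} {Φ : ℕ → ℕ} {y : ℕ → ℕ → Fin m → ℝ}

lemma Sig_zero : Sig m α Φ y 0 = α • 1 := rfl

lemma Sig_succ (t : ℕ) : Sig m α Φ y (t + 1) =
    Sig m α Φ y t + ∑ k ∈ Icc 1 (Φ (t + 1)), vecMulVec (y (t + 1) k) (y (t + 1) k) := rfl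

lemma posDef_Sig (hα : 0 < α) (t : ℕ) : (Sig m α Φ y t).PosDef := by
  induction t with
  | zero => exact PosDef.one.smul hα
  | succ t ih => exact ih.add_posSemidef (posSemidef_sum_vecMulVec_self _ _)

lemma mul_dotProduct_self_le_dotProduct_Sig_mulVec (t : ℕ) (x : Fin m → ℝ) :
    α * (x ⬝ᵥ x) ≤ x ⬝ᵥ Sig m α Φ y t *ᵥ x := by
  induction t with
  | zero => simp [Sig_zero, smul_mulVec]
  | succ t ih =>
    have := (posSemidef_sum_vecMulVec_self (Icc 1 (Φ (t + 1))) (y (t + 1))).dotProduct_mulVec_nonneg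
      x
    rw [Sig_succ, add_mulVec, dotProduct_add]
    simp only [star_trivial] at this
    linarith

lemma dotProduct_Sig_inv_mulVec_nonneg (hα : 0 < α) (t : ℕ) (v : Fin m → ℝ) :
    0 ≤ v ⬝ᵥ (Sig m α Φ y t)⁻¹ *ᵥ v := by
  simpa using (posDef_Sig hα t).inv.posSemidef.dotProduct_mulVec_nonneg v

lemma dotProduct_Sig_inv_mulVec_le_inv (hα : 0 < α) (t : ℕ) {v : Fin m → ℝ} (hv : v ⬝ᵥ v ≤ 1) :
    v ⬝ᵥ (Sig m α Φ y t)⁻¹ *ᵥ v ≤ α⁻¹ :=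
  (dotProduct_inv_mulVec_le (posDef_Sig hα t).isUnit hα
    (mul_dotProduct_self_le_dotProduct_Sig_mulVec t) v).trans
    (mul_le_of_le_one_right (inv_nonneg.2 hα.le) hv)

lemma trace_Sig (t : ℕ) : (Sig m α Φ y t).trace =
    α * m + ∑ s ∈ Icc 1 t, ∑ k ∈ Icc 1 (Φ s), y s k ⬝ᵥ y s k := by
  induction t with
  | zero => simp [Sig_zero]
  | succ t ih =>
    rw [Sig_succ, trace_add, ih, trace_sum, sum_Icc_succ_top (by omega)]
    simp [add_assoc]

lemma log_det_Sig_zero : Real.log (Sig m α Φ y 0).det = m * Real.log α := by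
  rw [Sig_zero, det_smul, det_one, mul_one, Fintype.card_fin, Real.log_pow]

lemma log_one_add_sum_le_log_det_Sig_succ_sub (hα : 0 < α) (t : ℕ) :
    Real.log (1 + ∑ k ∈ Icc 1 (Φ (t + 1)), y (t + 1) k ⬝ᵥ (Sig m α Φ y t)⁻¹ *ᵥ y (t + 1) k) ≤
      Real.log (Sig m α Φ y (t + 1)).det - Real.log (Sig m α Φ y t).det := by
  have hSig := posDef_Sig (Φ := Φ) (y := y) hα t
  have hstep := hSig.det_mul_one_add_trace_inv_mul_le_det_add
    (posSemidef_sum_vecMulVec_self (Icc 1 (Φ (t + 1))) (y (t + 1)))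
  simp only [mul_sum, trace_sum, trace_mul_vecMulVec_self] at hstep
  have hS : 0 ≤ ∑ k ∈ Icc 1 (Φ (t + 1)), y (t + 1) k ⬝ᵥ (Sig m α Φ y t)⁻¹ *ᵥ y (t + 1) k :=
    sum_nonneg fun k _ => dotProduct_Sig_inv_mulVec_nonneg hα t _
  rw [le_sub_iff_add_le', ← Real.log_mul hSig.det_pos.ne' (by positivity), Sig_succ]
  exact Real.log_le_log (mul_pos hSig.det_pos (by positivity)) hstep

lemma sum_log_one_add_le_log_det_Sig_sub (hα : 0 < α) (T : ℕ) :
    ∑ t ∈ Icc 1 T, Real.log (1 + ∑ k ∈ Icc 1 (Φ t), y t k ⬝ᵥ (Sig m α Φ y (t - 1))⁻¹ *ᵥ y t k) ≤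
      Real.log (Sig m α Φ y T).det - Real.log (Sig m α Φ y 0).det := by
  induction T with
  | zero => simp
  | succ T ih =>
    rw [sum_Icc_succ_top (by omega), Nat.add_sub_cancel]
    linarith [log_one_add_sum_le_log_det_Sig_succ_sub (Φ := Φ) (y := y) hα T]

end Sig

lemma sum_sum_Icc_le_mul {N T : ℕ} {Φ : ℕ → ℕ} (hΦ : ∀ t ∈ Icc 1 T, Φ t ≤ N) {f : ℕ → ℕ → ℝ}
    (hf : ∀ t ∈ Icc 1 T, ∀ k ∈ Icc 1 (Φ t), f t k ≤ 1) :
    ∑ t ∈ Icc 1 T, ∑ k ∈ Icc 1 (Φ t), f t k ≤ T * N := by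
  have hrow : ∀ t ∈ Icc 1 T, ∑ k ∈ Icc 1 (Φ t), f t k ≤ N := fun t ht =>
    calc ∑ k ∈ Icc 1 (Φ t), f t k ≤ #(Icc 1 (Φ t)) • (1 : ℝ) := sum_le_card_nsmul _ _ _ (hf t ht)
      _ ≤ N := by simpa using hΦ t ht
  simpa using sum_le_card_nsmul _ _ _ hrow

theorem sum_sum_dotProduct_Sig_inv_mulVec_le {m N T : ℕ} (hm : 1 ≤ m) {α : ℝ} (hα : 0 < α)
    {Φ : ℕ → ℕ} (hΦ : ∀ t ∈ Icc 1 T, Φ t ≤ N) {y : ℕ → ℕ → Fin m → ℝ}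
    (hy : ∀ t ∈ Icc 1 T, ∀ k ∈ Icc 1 (Φ t), y t k ⬝ᵥ y t k ≤ 1) :
    ∑ t ∈ Icc 1 T, ∑ k ∈ Icc 1 (Φ t), y t k ⬝ᵥ (Sig m α Φ y (t - 1))⁻¹ *ᵥ y t k ≤
      N * m * Real.log (1 + T * N / (m * α)) / (α * Real.log (1 + α⁻¹)) := by
  set S : ℕ → ℝ := fun t => ∑ k ∈ Icc 1 (Φ t), y t k ⬝ᵥ (Sig m α Φ y (t - 1))⁻¹ *ᵥ y t k
  set C := α⁻¹ / Real.log (1 + α⁻¹)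
  have hC : 0 ≤ C := div_nonneg (by positivity) (Real.log_nonneg (by simp [hα.le]))
  have hround : ∀ t ∈ Icc 1 T, S t ≤ N * C * Real.log (1 + S t) := by
    intro t ht
    have hq : ∀ k ∈ Icc 1 (Φ t), 0 ≤ y t k ⬝ᵥ (Sig m α Φ y (t - 1))⁻¹ *ᵥ y t k ∧
        y t k ⬝ᵥ (Sig m α Φ y (t - 1))⁻¹ *ᵥ y t k ≤ α⁻¹ := fun k hk =>
      ⟨dotProduct_Sig_inv_mulVec_nonneg hα _ _,
        dotProduct_Sig_inv_mulVec_le_inv hα _ (hy t ht k hk)⟩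
    refine (sum_le_card_mul_div_log_mul_log_one_add_sum _ (inv_pos.2 hα) hq).trans ?_
    have hS : 0 ≤ S t := sum_nonneg fun k hk => (hq k hk).1
    gcongr
    · exact Real.log_nonneg (by linarith)
    · simpa using hΦ t ht
  have hdet : Real.log (Sig m α Φ y T).det - Real.log (Sig m α Φ y 0).det ≤
      m * Real.log (1 + T * N / (m * α)) := by
    have hm0 : (m : ℝ) ≠ 0 := by positivity
    have htr : (Sig m α Φ y T).trace ≤ Fintype.card (Fin m) * (α * (1 + T * N / (m * α))) := by
      rw [trace_Sig, Fintype.card_fin]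
      have := sum_sum_Icc_le_mul hΦ hy
      calc _ ≤ α * m + T * N := by linarith
        _ = _ := by field_simp
    have := (posDef_Sig (Φ := Φ) (y := y) hα T).log_det_le_card_mul_log (by positivity) htr
    rw [Fintype.card_fin, Real.log_mul hα.ne' (by positivity)] at this
    rw [log_det_Sig_zero]
    linarith
  calc ∑ t ∈ Icc 1 T, S t ≤ ∑ t ∈ Icc 1 T, N * C * Real.log (1 + S t) := sum_le_sum hround
    _ ≤ N * C * (m * Real.log (1 + T * N / (m * α))) := by
        rw [← mul_sum]
        exact mul_le_mul_of_nonneg_left ((sum_log_one_add_le_log_det_Sig_sub hα T).trans hdet)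
          (by positivity)
    _ = N * m * Real.log (1 + T * N / (m * α)) / (α * Real.log (1 + α⁻¹)) := by
        simp only [C]
        field_simp

theorem stmt16_general (m N T : ℕ) (hm : 1 ≤ m)
    (α : ℝ) (hα : 0 < α)
    (Φ : ℕ → ℕ) (hΦ : ∀ t ∈ Finset.Icc 1 T, Φ t ≤ N)
    (y : ℕ → ℕ → Fin m → ℝ)
    (hy : ∀ t ∈ Finset.Icc 1 T, ∀ k ∈ Finset.Icc 1 (Φ t),
      Real.sqrt (y t k ⬝ᵥ y t k) ≤ 1) :
    ∑ t ∈ Finset.Icc 1 T, ∑ k ∈ Finset.Icc 1 (Φ t),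
        Real.sqrt (y t k ⬝ᵥ (Sig m α Φ y (t - 1))⁻¹ *ᵥ y t k) ≤
      Real.sqrt ((T : ℝ) * N ^ 2 * m * Real.log (1 + T * N / (m * α)) /
        (α * Real.log (1 + α⁻¹))) := by
  have hq : ∀ t ∈ Icc 1 T, ∀ k ∈ Icc 1 (Φ t), 0 ≤ y t k ⬝ᵥ (Sig m α Φ y (t - 1))⁻¹ *ᵥ y t k :=
    fun t _ k _ => dotProduct_Sig_inv_mulVec_nonneg hα _ _
  have hcard : ((∑ t ∈ Icc 1 T, #(Icc 1 (Φ t)) : ℕ) : ℝ) ≤ T * N := by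
    simpa using sum_sum_Icc_le_mul (f := fun _ _ => 1) hΦ (by simp)
  have hpot := sum_sum_dotProduct_Sig_inv_mulVec_le hm hα hΦ
    fun t ht k hk => Real.sqrt_le_one.mp (hy t ht k hk)
  calc _ ≤ √((∑ t ∈ Icc 1 T, #(Icc 1 (Φ t)) : ℕ) * ∑ t ∈ Icc 1 T, ∑ k ∈ Icc 1 (Φ t),
        y t k ⬝ᵥ (Sig m α Φ y (t - 1))⁻¹ *ᵥ y t k) := sum_sum_sqrt_le_sqrt_card_mul _ _ hq
    _ ≤ √(T * N * (N * m * Real.log (1 + T * N / (m * α)) / (α * Real.log (1 + α⁻¹)))) := by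
        gcongr
        exact sum_nonneg fun t ht => sum_nonneg (hq t ht)
    _ = _ := by ring_nf

/-- the Cauchy–Schwarz consequence of the elliptical potential bound:
`Σ_{t=1}^T Σ_{k=1}^{Φ_t} g_{t,k} ≤ √(T N² m log(1 + TN/(mα)) / (α log(1 + α⁻¹)))`, where
`g_{t,k} = (y_{t,k}ᵀ (Σ_{t-1})⁻¹ y_{t,k})^{1/2}`. -/
theorem stmt16 (m N T : ℕ) (hm : 1 ≤ m) (hN : 1 ≤ N) (hT : 1 ≤ T)
    (α : ℝ) (hα : 0 < α)
    (Φ : ℕ → ℕ) (hΦ : ∀ t ∈ Finset.Icc 1 T, Φ t ≤ N)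
    (y : ℕ → ℕ → Fin m → ℝ)
    (hy : ∀ t ∈ Finset.Icc 1 T, ∀ k ∈ Finset.Icc 1 (Φ t),
      Real.sqrt (y t k ⬝ᵥ y t k) ≤ 1) :
    ∑ t ∈ Finset.Icc 1 T, ∑ k ∈ Finset.Icc 1 (Φ t),
        Real.sqrt (y t k ⬝ᵥ (Sig m α Φ y (t - 1))⁻¹ *ᵥ y t k) ≤
      Real.sqrt ((T : ℝ) * N ^ 2 * m * Real.log (1 + T * N / (m * α)) /
        (α * Real.log (1 + α⁻¹))) :=
  stmt16_general m N T hm α hα Φ hΦ y hy
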